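/- In the max-plus gadget graph H, there exists a path from u_0 to w_{N−1} with hop count at most N+2 and total weight strictly less than 15W if and only if there exist ℓ ∈ {1,…,M} and i, j, k ∈ {0,…,N−1} with i + j ≤ k and c[k] < a_ℓ[i] + b_ℓ[j]. -/

import Mathlib

/-- Vertex set of the max-plus gadget graph: `U ⊕ V ⊕ W ⊕ X`. -/
abbrev MPVert (N M : ℕ) := (Fin N ⊕ Fin N) ⊕ (Fin N ⊕ Fin M)

/-- Vertex `u_i`. -/
def vu (N M : ℕ) (i : Fin N) : MPVert N M := Sum.inl (Sum.inl i)
/-- Vertex `v_j`. -/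
def vv (N M : ℕ) (j : Fin N) : MPVert N M := Sum.inl (Sum.inr j)
/-- Vertex `w_k`. -/
def vw (N M : ℕ) (k : Fin N) : MPVert N M := Sum.inr (Sum.inl k)
/-- Vertex `x_ℓ`. -/
def vx (N M : ℕ) (l : Fin M) : MPVert N M := Sum.inr (Sum.inr l)

/-- Adjacency (as a `Bool`) of the max-plus gadget graph. -/
def mpAdjB (N M : ℕ) : MPVert N M → MPVert N M → Bool
  | Sum.inl (Sum.inl i), Sum.inl (Sum.inl i') => i.val + 1 == i'.val || i'.val + 1 == i.val
  | Sum.inl (Sum.inr j), Sum.inl (Sum.inr j') => j.val + 1 == j'.val || j'.val + 1 == j.val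
  | Sum.inr (Sum.inl k), Sum.inr (Sum.inl k') => k.val + 1 == k'.val || k'.val + 1 == k.val
  | Sum.inl (Sum.inl _), Sum.inr (Sum.inr _) => true
  | Sum.inr (Sum.inr _), Sum.inl (Sum.inl _) => true
  | Sum.inr (Sum.inr _), Sum.inl (Sum.inr _) => true
  | Sum.inl (Sum.inr _), Sum.inr (Sum.inr _) => true
  | Sum.inl (Sum.inr j), Sum.inr (Sum.inl _) => j.val == 0
  | Sum.inr (Sum.inl _), Sum.inl (Sum.inr j) => j.val == 0
  | _, _ => false

/-- The max-plus gadget graph. -/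
def mpGraph (N M : ℕ) : SimpleGraph (MPVert N M) where
  Adj x y := mpAdjB N M x y = true
  symm := by
    constructor
    rintro ((i | j) | (k | l)) ((i' | j') | (k' | l')) h <;>
      simp_all [mpAdjB] <;> omega
  loopless := by
    constructor
    rintro ((i | j) | (k | l)) h <;> simp_all [mpAdjB]

/-- The edge weights of the max-plus gadget graph. -/
def mpW (N M : ℕ) (W : ℤ) (a b : Fin M → Fin N → ℤ) (c : Fin N → ℤ) :
    MPVert N M → MPVert N M → ℤ
  | Sum.inl (Sum.inl i), Sum.inr (Sum.inr l) => 5 * W - a l i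
  | Sum.inr (Sum.inr l), Sum.inl (Sum.inl i) => 5 * W - a l i
  | Sum.inr (Sum.inr l), Sum.inl (Sum.inr j) => 5 * W - b l j
  | Sum.inl (Sum.inr j), Sum.inr (Sum.inr l) => 5 * W - b l j
  | Sum.inl (Sum.inr _), Sum.inr (Sum.inl k) => 5 * W + c k
  | Sum.inr (Sum.inl k), Sum.inl (Sum.inr _) => 5 * W + c k
  | _, _ => 0

/-- The total weight of a walk: the sum of the weights of its edges, with multiplicity. -/
def walkWeight {V : Type*} {G : SimpleGraph V} (w : V → V → ℤ) {s t : V}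
    (p : G.Walk s t) : ℤ :=
  (p.darts.map fun d => w d.toProd.1 d.toProd.2).sum

/-!
Every edge at some `x_ℓ` and every edge `v_0 w_k` weighs between `4W` and `6W`, and a walk from
`u_0` to `w_{N-1}` must use at least one edge `u x`, one edge `x v` and one edge `v_0 w`. With a
fourth such edge it weighs at least `16W`, so a walk lighter than `15W` has the shape
`u_0 ⋯ u_i x_ℓ v_j ⋯ v_0 w_k ⋯ w_{N-1}`, of weight `15W - a_ℓ[i] - b_ℓ[j] + c[k]` and length at
least `i + j + (N - 1 - k) + 3`; the hop bound then says `i + j ≤ k`. Conversely this walk exists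
for every quadruple, and `Walk.bypass` turns it into a path without increasing its length or,
the weights being nonnegative, its weight.
-/

open SimpleGraph

section WalkWeight

variable {V : Type*} {G : SimpleGraph V} (w : V → V → ℤ)

@[simp] lemma walkWeight_cons {s t u : V} (h : G.Adj s t) (p : G.Walk t u) :
    walkWeight w (Walk.cons h p) = w s t + walkWeight w p := by
  simp [walkWeight]

@[simp] lemma walkWeight_append {s t u : V} (p : G.Walk s t) (q : G.Walk t u) :
    walkWeight w (p.append q) = walkWeight w p + walkWeight w q := by
  simp [walkWeight, Walk.darts_append]

lemma walkWeight_reverse (hw : ∀ x y, w x y = w y x) {s t : V} (p : G.Walk s t) :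
    walkWeight w p.reverse = walkWeight w p := by
  simp only [walkWeight, Walk.darts_reverse, List.map_reverse, List.sum_reverse, List.map_map]
  congr 1
  exact List.map_congr_left fun d _ => hw _ _

lemma walkWeight_bypass_le [DecidableEq V] (hw : ∀ x y, 0 ≤ w x y) {s t : V} (p : G.Walk s t) :
    walkWeight w p.bypass ≤ walkWeight w p := by
  have hnd : p.bypass.darts.Nodup :=
    List.Nodup.of_map Dart.edge (by simpa [Walk.edges] using p.bypass_isPath.isTrail.edges_nodup)
  obtain ⟨l, hperm, hsub⟩ := hnd.subperm p.darts_bypass_subset_darts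
  calc walkWeight w p.bypass
      = (l.map fun d => w d.toProd.1 d.toProd.2).sum := (List.Perm.sum_eq (hperm.map _)).symm
    _ ≤ walkWeight w p := List.Sublist.sum_le_sum (hsub.map _) (by simp [hw])

lemma exists_walk_of_chain {n : ℕ} (e : Fin n → V)
    (he : ∀ i j : Fin n, i.val + 1 = j.val → G.Adj (e i) (e j) ∧ w (e i) (e j) = 0)
    {i j : Fin n} (hij : i ≤ j) :
    ∃ p : G.Walk (e i) (e j), p.length = j - i ∧ walkWeight w p = 0 := by
  obtain ⟨d, hd⟩ := Nat.exists_eq_add_of_le (Fin.le_def.1 hij)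
  induction d generalizing i with
  | zero =>
    obtain rfl : i = j := Fin.ext (by omega)
    exact ⟨.nil, by simp, rfl⟩
  | succ d ih =>
    obtain ⟨hadj, hw⟩ := he i ⟨i + 1, by omega⟩ rfl
    obtain ⟨p, hlen, hwt⟩ := ih (i := ⟨i + 1, by omega⟩) (Fin.le_def.2 (by dsimp only; omega)) (by dsimp only; omega)
    exact ⟨.cons hadj p, by rw [Walk.length_cons, hlen]; dsimp only; omega, by simp [hw, hwt]⟩

end WalkWeight

/- `TailBound W a b c m s wt len` holds for the weight `wt` and length `len` of every walk from `s`
to `w_m`: either the walk is heavy, or the rest of it has the light shape described above, whose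
witnesses are recorded. -/
def TailBound {N M : ℕ} (W : ℤ) (a b : Fin M → Fin N → ℤ) (c : Fin N → ℤ) (m : Fin N) :
    MPVert N M → ℤ → ℕ → Prop
  | Sum.inl (Sum.inl i), wt, len => 13 * W ≤ wt ∧ (15 * W ≤ wt ∨ ∃ l i' j k,
      15 * W - a l i' - b l j + c k ≤ wt ∧ i'.val + j + m + 3 ≤ i + k + len)
  | Sum.inl (Sum.inr j), wt, len => 5 * W ≤ wt ∧ (11 * W ≤ wt ∨ ∃ k,
      5 * W + c k ≤ wt ∧ j.val + m + 1 ≤ k + len)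
  | Sum.inr (Sum.inl k), wt, len => 0 ≤ wt ∧ (10 * W ≤ wt ∨ m.val ≤ k + len)
  | Sum.inr (Sum.inr l), wt, len => 9 * W ≤ wt ∧ (11 * W ≤ wt ∨ ∃ j k,
      10 * W - b l j + c k ≤ wt ∧ j.val + m + 2 ≤ k + len)

section Gadget

variable {N M : ℕ} {W : ℤ} {a b : Fin M → Fin N → ℤ} {c : Fin N → ℤ}

lemma mpW_symm (x y : MPVert N M) : mpW N M W a b c x y = mpW N M W a b c y x := by
  rcases x with ((_ | _) | (_ | _)) <;> rcases y with ((_ | _) | (_ | _)) <;> rfl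

lemma mpW_nonneg (ha : ∀ l i, 0 ≤ a l i ∧ a l i ≤ W) (hb : ∀ l j, 0 ≤ b l j ∧ b l j ≤ W)
    (hc : ∀ k, 0 ≤ c k ∧ c k ≤ W) (x y : MPVert N M) : 0 ≤ mpW N M W a b c x y := by
  rcases x with ((i | j) | (k | l)) <;> rcases y with ((i' | j') | (k' | l')) <;>
    simp only [mpW, le_refl] <;> grind

lemma exists_walk_vu_vw (l : Fin M) (i j k m : Fin N) (hkm : k ≤ m) :
    ∃ p : (mpGraph N M).Walk (vu N M ⟨0, i.pos⟩) (vw N M m),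
      p.length = i + j + (m - k) + 3 ∧
      walkWeight (mpW N M W a b c) p = 15 * W - a l i - b l j + c k := by
  obtain ⟨pu, hlu, hwu⟩ := exists_walk_of_chain (G := mpGraph N M) (mpW N M W a b c) (vu N M)
    (fun _ _ h => ⟨by simp [mpGraph, mpAdjB, vu, h], rfl⟩) (Fin.mk_le_of_le_val (Nat.zero_le i))
  obtain ⟨pv, hlv, hwv⟩ := exists_walk_of_chain (G := mpGraph N M) (mpW N M W a b c) (vv N M)
    (fun _ _ h => ⟨by simp [mpGraph, mpAdjB, vv, h], rfl⟩) (Fin.mk_le_of_le_val (Nat.zero_le j))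
  obtain ⟨pw, hlw, hww⟩ := exists_walk_of_chain (G := mpGraph N M) (mpW N M W a b c) (vw N M)
    (fun _ _ h => ⟨by simp [mpGraph, mpAdjB, vw, h], rfl⟩) hkm
  have hux : (mpGraph N M).Adj (vu N M i) (vx N M l) := rfl
  have hxv : (mpGraph N M).Adj (vx N M l) (vv N M j) := rfl
  have hvw : (mpGraph N M).Adj (vv N M ⟨0, j.pos⟩) (vw N M k) := rfl
  refine ⟨pu.append (.cons hux (.cons hxv (pv.reverse.append (.cons hvw pw)))), ?_, ?_⟩
  · simp only [Walk.length_append, Walk.length_cons, Walk.length_reverse, hlu, hlv, hlw]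
    omega
  · simp only [walkWeight_append, walkWeight_cons, walkWeight_reverse _ mpW_symm, hwu, hwv, hww]
    simp only [mpW, vu, vv, vw, vx]
    ring

lemma TailBound.cons (ha : ∀ l i, 0 ≤ a l i ∧ a l i ≤ W) (hb : ∀ l j, 0 ≤ b l j ∧ b l j ≤ W)
    (hc : ∀ k, 0 ≤ c k ∧ c k ≤ W) {m : Fin N} {s t : MPVert N M} {wt : ℤ} {len : ℕ}
    (hst : (mpGraph N M).Adj s t) (h : TailBound W a b c m t wt len) :
    TailBound W a b c m s (mpW N M W a b c s t + wt) (len + 1) := by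
  change mpAdjB N M s t = true at hst
  rcases s with ((i | j) | (k | l)) <;> rcases t with ((i' | j') | (k' | l')) <;>
    simp only [mpAdjB, Bool.or_eq_true, beq_iff_eq, Bool.false_eq_true] at hst <;>
    simp only [TailBound, mpW, zero_add] at h ⊢ <;> obtain ⟨hwt, hshape⟩ := h
  case inl.inl.inl.inl =>
    refine ⟨hwt, hshape.imp id ?_⟩
    rintro ⟨l, i'', j, k, hw, hl⟩
    exact ⟨l, i'', j, k, hw, by omega⟩
  case inl.inl.inr.inr =>
    obtain ⟨-, haW⟩ := ha l' i
    refine ⟨by linarith, hshape.imp (fun _ => by linarith) ?_⟩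
    rintro ⟨j, k, hw, hl⟩
    exact ⟨l', i, j, k, by linarith, by omega⟩
  case inl.inr.inl.inr =>
    refine ⟨hwt, hshape.imp id ?_⟩
    rintro ⟨k, hw, hl⟩
    exact ⟨k, hw, by omega⟩
  case inl.inr.inr.inl =>
    obtain ⟨hc0, -⟩ := hc k'
    refine ⟨by linarith, hshape.imp (fun _ => by linarith) fun hl => ⟨k', by linarith, by omega⟩⟩
  case inl.inr.inr.inr =>
    obtain ⟨hb0, hbW⟩ := hb l' j
    exact ⟨by linarith, Or.inl (by linarith)⟩
  case inr.inl.inl.inr =>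
    obtain ⟨hc0, hcW⟩ := hc k
    exact ⟨by linarith, Or.inl (by linarith)⟩
  case inr.inl.inr.inl =>
    exact ⟨hwt, hshape.imp id fun hl => by omega⟩
  case inr.inr.inl.inl =>
    obtain ⟨ha0, haW⟩ := ha l i'
    exact ⟨by linarith, Or.inl (by linarith)⟩
  case inr.inr.inl.inr =>
    obtain ⟨-, hbW⟩ := hb l j'
    refine ⟨by linarith, hshape.imp (fun _ => by linarith) ?_⟩
    rintro ⟨k, hw, hl⟩
    exact ⟨j', k, by linarith, by omega⟩

lemma tailBound_of_walk (ha : ∀ l i, 0 ≤ a l i ∧ a l i ≤ W) (hb : ∀ l j, 0 ≤ b l j ∧ b l j ≤ W)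
    (hc : ∀ k, 0 ≤ c k ∧ c k ≤ W) {m : Fin N} {s t : MPVert N M} (p : (mpGraph N M).Walk s t)
    (ht : t = vw N M m) : TailBound W a b c m s (walkWeight (mpW N M W a b c) p) p.length := by
  induction p with
  | nil => subst ht; exact ⟨le_rfl, Or.inr (by simp)⟩
  | cons hst q ih =>
    rw [walkWeight_cons, Walk.length_cons]
    exact (ih ht).cons ha hb hc hst

end Gadget

/-- In the max-plus gadget graph there is a path from `u_0` to `w_{N−1}`
with at most `N+2` hops and total weight strictly less than `15W` iff there is a
violating quadruple `(i, j, k, ℓ)` with `i + j ≤ k` and `c[k] < a_ℓ[i] + b_ℓ[j]`. -/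
theorem stmt8 (N M : ℕ) (hN : 1 ≤ N) (W : ℤ)
    (a b : Fin M → Fin N → ℤ) (c : Fin N → ℤ)
    (ha : ∀ l i, 0 ≤ a l i ∧ a l i ≤ W) (hb : ∀ l j, 0 ≤ b l j ∧ b l j ≤ W)
    (hc : ∀ k, 0 ≤ c k ∧ c k ≤ W) :
    (∃ p : (mpGraph N M).Walk (vu N M ⟨0, by omega⟩) (vw N M ⟨N - 1, by omega⟩),
        p.IsPath ∧ p.length ≤ N + 2 ∧ walkWeight (mpW N M W a b c) p < 15 * W) ↔
    (∃ (l : Fin M) (i j k : Fin N), i.val + j.val ≤ k.val ∧ c k < a l i + b l j) := by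
  constructor
  · rintro ⟨p, -, hlen, hwt⟩
    rcases (tailBound_of_walk ha hb hc p rfl).2 with h15 | ⟨l, i, j, k, hw, hl⟩
    · exact absurd hwt h15.not_gt
    · exact ⟨l, i, j, k, by dsimp only at hl; omega, by linarith⟩
  · rintro ⟨l, i, j, k, hijk, hcab⟩
    obtain ⟨p, hlen, hwt⟩ := exists_walk_vu_vw (W := W) (a := a) (b := b) (c := c) l i j k
      ⟨N - 1, by omega⟩ (Fin.le_def.2 (by dsimp only; omega))
    refine ⟨p.bypass, p.bypass_isPath, p.length_bypass_le_length.trans ?_,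
      (walkWeight_bypass_le _ (mpW_nonneg ha hb hc) p).trans_lt ?_⟩
    · simp only [hlen]; omega
    · linarith
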